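/- arXiv:2309.00867 — 3 statements merged into one kernel-verified Lean document; each statement's English description precedes it below -/
import Mathlib

section
/- If τ > 4, the cubic 2a³ − (τ+2)a² + (τ+2)a − 2 = 0 has exactly three distinct positive real roots; if 2 < τ ≤ 4, it has exactly one positive real root, namely a = 1. -/
theorem stmt_2 (τ : ℝ) :
    (4 < τ → {a : ℝ | 0 < a ∧ 2 * a^3 - (τ + 2) * a^2 + (τ + 2) * a - 2 = 0}.ncard = 3) ∧
    (2 < τ → τ ≤ 4 →
      {a : ℝ | 0 < a ∧ 2 * a^3 - (τ + 2) * a^2 + (τ + 2) * a - 2 = 0} = {1}) := by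
  constructor
  · intro hτ
    set s := Real.sqrt (τ^2 - 16) with hs_def
    have hs0 : (0:ℝ) ≤ s := Real.sqrt_nonneg _
    have hs2 : s^2 = τ^2 - 16 := Real.sq_sqrt (by nlinarith)
    have hspos : 0 < s := by
      rcases hs0.lt_or_eq with h | h
      · exact h
      · exfalso; nlinarith [hs2, h.symm]
    have hslt : s < τ := by nlinarith
    set r₁ := (τ - s) / 4 with hr₁
    set r₂ := (τ + s) / 4 with hr₂
    have hsum : r₁ + r₂ = τ / 2 := by rw [hr₁, hr₂]; ring
    have hprod : r₁ * r₂ = 1 := by rw [hr₁, hr₂]; nlinarith [hs2]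
    have hfact : ∀ a : ℝ, 2 * a^3 - (τ + 2) * a^2 + (τ + 2) * a - 2
        = 2 * (a - 1) * (a - r₁) * (a - r₂) := by
      intro a
      linear_combination (2*(a-1)*a) * hsum - (2*(a-1)) * hprod
    have hr1pos : 0 < r₁ := by rw [hr₁]; linarith
    have hr2pos : 0 < r₂ := by rw [hr₂]; linarith
    have hr1ne1 : r₁ ≠ 1 := by
      intro h; rw [hr₁] at h
      have : s = τ - 4 := by linarith
      nlinarith [hs2, this]
    have hr2ne1 : r₂ ≠ 1 := by
      intro h; rw [hr₂] at h; nlinarith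
    have hr12 : r₁ ≠ r₂ := by
      intro h; rw [hr₁, hr₂] at h; nlinarith
    have hset : {a : ℝ | 0 < a ∧ 2 * a^3 - (τ + 2) * a^2 + (τ + 2) * a - 2 = 0}
        = {1, r₁, r₂} := by
      ext a
      simp only [Set.mem_setOf_eq, Set.mem_insert_iff, Set.mem_singleton_iff]
      constructor
      · rintro ⟨_, heq⟩
        rw [hfact a] at heq
        have := mul_eq_zero.mp heq
        rcases this with h | h
        · rcases mul_eq_zero.mp h with h | h
          · left; nlinarith [h]
          · right; left; linarith
        · right; right; linarith
      · rintro (rfl | rfl | rfl)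
        · exact ⟨one_pos, by rw [hfact]; ring⟩
        · exact ⟨hr1pos, by rw [hfact]; ring⟩
        · exact ⟨hr2pos, by rw [hfact]; ring⟩
    rw [hset]
    rw [Set.ncard_eq_three]
    exact ⟨1, r₁, r₂, hr1ne1.symm, hr2ne1.symm, hr12, rfl⟩
  · intro h2 h4
    ext a
    simp only [Set.mem_setOf_eq, Set.mem_singleton_iff]
    constructor
    · rintro ⟨hpos, heq⟩
      have hfact : (a - 1) * (2 * a^2 - τ * a + 2) = 0 := by linear_combination heq
      rcases mul_eq_zero.mp hfact with h | h
      · linarith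
      · -- 2a² - τa + 2 = 0 with 0 < a, τ ≤ 4 forces a = 1
        nlinarith [sq_nonneg (a - 1), mul_pos hpos hpos]
    · rintro rfl
      exact ⟨one_pos, by ring⟩
end

section
/- Let τ > 2, and let a, b be distinct positive reals satisfying the system a³ + ab² + (τ+2)a = τa² + 2b² + 2 and b³ + a²b + (τ+2)b = τb² + 2a² + 2. Then x = a + b satisfies the quadratic equation (τ−2)x² − (τ²−4)x + τ² + 4τ = 0. -/
theorem stmt_6 (τ a b : ℝ) (hτ : 2 < τ) (ha : 0 < a) (hb : 0 < b) (hab : a ≠ b)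
    (h1 : a^3 + a * b^2 + (τ + 2) * a = τ * a^2 + 2 * b^2 + 2)
    (h2 : b^3 + a^2 * b + (τ + 2) * b = τ * b^2 + 2 * a^2 + 2) :
    (τ - 2) * (a + b)^2 - (τ^2 - 4) * (a + b) + τ^2 + 4 * τ = 0 := by
  have hne : a - b ≠ 0 := sub_ne_zero.mpr hab
  have key : a^2 + b^2 + τ + 2 = (τ - 2) * (a + b) := by
    have h0 : (a - b) * ((a^2 + b^2 + τ + 2) - (τ - 2) * (a + b)) = 0 := by
      linear_combination h1 - h2
    rcases mul_eq_zero.mp h0 with h | h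
    · exact absurd h hne
    · linarith
  linear_combination h1 + h2 - (a + b - τ - 2) * key
end

section
/- For τ > 8, both discriminants D₁(τ) = 2(τ−2)(τ³−8τ²+4τ+40 + (6−τ)√((τ−2)(τ³−2τ²−20τ−8))) and D₂(τ) = 2(τ−2)(τ³−8τ²+4τ+40 − (6−τ)√((τ−2)(τ³−2τ²−20τ−8))) are strictly positive. -/
theorem stmt_17 (τ : ℝ) (hτ : 8 < τ) :
    0 < 2 * (τ - 2) * (τ^3 - 8 * τ^2 + 4 * τ + 40
        + (6 - τ) * Real.sqrt ((τ - 2) * (τ^3 - 2 * τ^2 - 20 * τ - 8))) ∧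
    0 < 2 * (τ - 2) * (τ^3 - 8 * τ^2 + 4 * τ + 40
        - (6 - τ) * Real.sqrt ((τ - 2) * (τ^3 - 2 * τ^2 - 20 * τ - 8))) := by
  set s := Real.sqrt ((τ - 2) * (τ^3 - 2 * τ^2 - 20 * τ - 8)) with hsdef
  have hSnn : 0 ≤ (τ - 2) * (τ^3 - 2 * τ^2 - 20 * τ - 8) := by
    nlinarith [sq_nonneg τ, sq_nonneg (τ - 8)]
  have hs0 : 0 ≤ s := Real.sqrt_nonneg _
  have hs2 : s ^ 2 = (τ - 2) * (τ^3 - 2 * τ^2 - 20 * τ - 8) := Real.sq_sqrt hSnn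
  have hA : 0 < τ^3 - 8 * τ^2 + 4 * τ + 40 := by nlinarith [sq_nonneg τ]
  have h2 : 0 < τ^3 - 8 * τ^2 + 4 * τ + 40 - (6 - τ) * s := by
    nlinarith [mul_nonneg hs0 (by linarith : (0:ℝ) ≤ τ - 6)]
  have key : 0 < (τ^3 - 8 * τ^2 + 4 * τ + 40 - (6 - τ) * s) *
      (τ^3 - 8 * τ^2 + 4 * τ + 40 + (6 - τ) * s) := by
    have heq : (τ^3 - 8 * τ^2 + 4 * τ + 40 - (6 - τ) * s) *
        (τ^3 - 8 * τ^2 + 4 * τ + 40 + (6 - τ) * s)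
        = (τ^3 - 8 * τ^2 + 4 * τ + 40)^2 - (6 - τ)^2 * s^2 := by ring
    rw [heq, hs2]
    nlinarith [sq_nonneg τ, sq_nonneg (τ - 8)]
  have h1 : 0 < τ^3 - 8 * τ^2 + 4 * τ + 40 + (6 - τ) * s := by
    by_contra h
    push_neg at h
    nlinarith
  have ht2 : 0 < τ - 2 := by linarith
  exact ⟨by positivity, by positivity⟩
end
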